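/- Let ρ ∈ (0,1] and let x be a multiplicative seminorm on the Laurent polynomial ring ℂ[t,t^{−1}] such that x(c·1) = |c|^ρ for all c ∈ ℂ and x(t) = e^{−1}. Then there exists a unique a ∈ ℂ with |a| = e^{−1/ρ} such that x(f) = |f(a)|^ρ for every f ∈ ℂ[t,t^{−1}]. -/

import Mathlib

/-! For `t` in a `ℂ`-algebra with such a seminorm `x`, the function `b ↦ x(t - b)` on `ℂ` is
Hölder continuous and proper, so it attains its minimum `m` at some `a`. If `m > 0` and
`x(t - b) = m`, factoring `(t - b)^n - d^n` over the `n`-th roots of unity gives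
`x(t - b - d) · m^(n-1) ≤ m^n + |d|^(ρn)`, and letting `n → ∞` shows `x(t - b - d) = m` whenever
`|d|^ρ < m`. The set where the minimum is attained is then open and closed, hence all of `ℂ`,
contradicting properness. So `x(t - a) = 0`, which forces `x(p) = |p(a)|^ρ` for polynomials `p`,
and multiplicativity extends this to Laurent polynomials. Finally `x(t) = e^{-1}` pins down `|a|`,
and `a` is unique because `x(t - a) = 0`. -/

/-- A multiplicative seminorm on a commutative ring `A`. -/
def IsMultSeminorm {A : Type*} [CommRing A] (x : A → ℝ) : Prop :=
  (∀ f, 0 ≤ x f) ∧ x 0 = 0 ∧ x 1 = 1 ∧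
    (∀ f g, x (f * g) = x f * x g) ∧ (∀ f g, x (f + g) ≤ x f + x g)

/-- The coefficients of a Laurent polynomial, as a finitely supported function `ℤ →₀ ℂ`. -/
def lcoeff (f : LaurentPolynomial ℂ) : ℤ →₀ ℂ := AddMonoidAlgebra.coeff f

/-- Evaluation of a Laurent polynomial at `a ∈ ℂ^*`. -/
noncomputable def laurentEvalAt (a : ℂ) (f : LaurentPolynomial ℂ) : ℂ :=
  (lcoeff f).sum fun j c => c * a ^ j

open Filter Topology
open scoped Polynomial

namespace IsMultSeminorm

variable {A : Type*} [CommRing A] {x : A → ℝ}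

lemma map_neg_one (hx : IsMultSeminorm x) : x (-1) = 1 := by
  obtain ⟨hnonneg, -, hone, hmul, -⟩ := hx
  have hsq : x (-1) ^ 2 = 1 := by rw [sq, ← hmul, neg_one_mul, neg_neg, hone]
  exact (pow_eq_one_iff_of_nonneg (hnonneg _) two_ne_zero).mp hsq

def toMulRingSeminorm (hx : IsMultSeminorm x) : MulRingSeminorm A where
  toFun := x
  map_zero' := hx.2.1
  add_le' := hx.2.2.2.2
  neg' f := by rw [← neg_one_mul, hx.2.2.2.1, hx.map_neg_one, one_mul]
  map_one' := hx.2.2.1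
  map_mul' := hx.2.2.2.1

end IsMultSeminorm

lemma pow_sub_algebraMap_pow_eq_prod {A : Type*} [CommRing A] [Algebra ℂ A] {n : ℕ} (hn : 0 < n)
    {ζ : ℂ} (hζ : IsPrimitiveRoot ζ n) (s : A) (d : ℂ) :
    s ^ n - algebraMap ℂ A (d ^ n) = ∏ i ∈ Finset.range n, (s - algebraMap ℂ A (ζ ^ i * d)) := by
  simpa using congrArg (Polynomial.aeval s) (X_pow_sub_C_eq_prod hζ hn rfl)

namespace MulRingSeminorm

variable {A : Type*} [CommRing A] (N : MulRingSeminorm A)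

lemma map_eq_of_map_sub_eq_zero {f g : A} (h : N (f - g) = 0) : N f = N g := by
  have hle := abs_sub_map_le_sub N f g
  rw [h] at hle
  exact sub_eq_zero.mp (abs_nonpos_iff.mp hle)

variable [Algebra ℂ A] {ρ : ℝ} {N} (hN : ∀ c : ℂ, N (algebraMap ℂ A c) = ‖c‖ ^ ρ)
include hN

lemma abs_map_sub_algebraMap_sub_le (t : A) (b c : ℂ) :
    |N (t - algebraMap ℂ A b) - N (t - algebraMap ℂ A c)| ≤ ‖b - c‖ ^ ρ := by
  have h := abs_sub_map_le_sub N (t - algebraMap ℂ A b) (t - algebraMap ℂ A c)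
  rwa [sub_sub_sub_cancel_left, ← map_sub (algebraMap ℂ A), hN, norm_sub_rev] at h

lemma continuous_map_sub_algebraMap (hρ : 0 < ρ) (t : A) :
    Continuous fun b : ℂ => N (t - algebraMap ℂ A b) := by
  refine continuous_iff_continuousAt.mpr fun c => tendsto_iff_dist_tendsto_zero.mpr ?_
  have hlim : Tendsto (fun b : ℂ => ‖b - c‖ ^ ρ) (𝓝 c) (𝓝 0) := by
    have h : Continuous fun b : ℂ => ‖b - c‖ ^ ρ :=
      (continuous_id.sub continuous_const).norm.rpow_const fun _ => Or.inr hρ.le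
    simpa [Real.zero_rpow hρ.ne'] using h.tendsto c
  exact squeeze_zero (fun _ => dist_nonneg)
    (fun b => (Real.dist_eq _ _).trans_le (abs_map_sub_algebraMap_sub_le hN t b c)) hlim

lemma tendsto_map_sub_algebraMap_cocompact (hρ : 0 < ρ) (t : A) :
    Tendsto (fun b : ℂ => N (t - algebraMap ℂ A b)) (cocompact ℂ) atTop := by
  have hlow : ∀ b : ℂ, ‖b‖ ^ ρ - N t ≤ N (t - algebraMap ℂ A b) := fun b => by
    have h := map_sub_le_add N t (t - algebraMap ℂ A b)
    rw [sub_sub_cancel, hN] at h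
    linarith
  exact tendsto_atTop_mono hlow <| tendsto_atTop_add_const_right _ _ <|
    (tendsto_rpow_atTop hρ).comp (tendsto_norm_cocompact_atTop (E := ℂ))

lemma map_sub_algebraMap_add_mul_pow_le {t : A} {m : ℝ} (hm : 0 ≤ m)
    (hmin : ∀ c, m ≤ N (t - algebraMap ℂ A c)) (b d : ℂ) (k : ℕ) :
    N (t - algebraMap ℂ A (b + d)) * m ^ k ≤
      N (t - algebraMap ℂ A b) ^ (k + 1) + (‖d‖ ^ ρ) ^ (k + 1) := by
  have hζ := Complex.isPrimitiveRoot_exp (k + 1) k.succ_ne_zero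
  set ζ := Complex.exp (2 * Real.pi * Complex.I / (k + 1 : ℕ))
  have hfactor := pow_sub_algebraMap_pow_eq_prod k.succ_pos hζ (t - algebraMap ℂ A b) d
  simp only [sub_sub, ← map_add] at hfactor
  have hlow : m ^ k ≤ ∏ i ∈ Finset.range k, N (t - algebraMap ℂ A (b + ζ ^ (i + 1) * d)) := by
    calc m ^ k = ∏ _i ∈ Finset.range k, m := by rw [Finset.prod_const, Finset.card_range]
      _ ≤ _ := Finset.prod_le_prod (fun _ _ => hm) fun i _ => hmin _
  calc N (t - algebraMap ℂ A (b + d)) * m ^ k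
      ≤ N (t - algebraMap ℂ A (b + d)) *
          ∏ i ∈ Finset.range k, N (t - algebraMap ℂ A (b + ζ ^ (i + 1) * d)) := by
        gcongr
    _ = N ((t - algebraMap ℂ A b) ^ (k + 1) - algebraMap ℂ A (d ^ (k + 1))) := by
        rw [hfactor, map_prod, Finset.prod_range_succ', pow_zero, one_mul, mul_comm]
    _ ≤ N (t - algebraMap ℂ A b) ^ (k + 1) + (‖d‖ ^ ρ) ^ (k + 1) := by
        grw [map_sub_le_add, map_pow, hN, norm_pow, Real.rpow_pow_comm (norm_nonneg d)]

lemma map_sub_algebraMap_add_le {t : A} {m : ℝ} (hm : 0 < m)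
    (hmin : ∀ c, m ≤ N (t - algebraMap ℂ A c)) {b d : ℂ} (hb : N (t - algebraMap ℂ A b) = m)
    (hd : ‖d‖ ^ ρ < m) : N (t - algebraMap ℂ A (b + d)) ≤ m := by
  set q := ‖d‖ ^ ρ
  have hlim : Tendsto (fun k : ℕ => m + q * (q / m) ^ k) atTop (𝓝 m) := by
    simpa using ((tendsto_pow_atTop_nhds_zero_of_lt_one (by positivity)
      ((div_lt_one hm).mpr hd)).const_mul q).const_add m
  refine ge_of_tendsto hlim (Eventually.of_forall fun k => ?_)
  have hk := map_sub_algebraMap_add_mul_pow_le hN hm.le hmin b d k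
  rw [hb, ← le_div_iff₀ (by positivity)] at hk
  calc N (t - algebraMap ℂ A (b + d)) ≤ (m ^ (k + 1) + q ^ (k + 1)) / m ^ k := hk
    _ = m + q * (q / m) ^ k := by
      rw [pow_succ', pow_succ', add_div, mul_div_cancel_right₀ _ (pow_ne_zero k hm.ne'),
        mul_div_assoc, div_pow]

theorem exists_map_sub_algebraMap_eq_zero (hρ : 0 < ρ) (t : A) :
    ∃ a : ℂ, N (t - algebraMap ℂ A a) = 0 := by
  set φ : ℂ → ℝ := fun b => N (t - algebraMap ℂ A b)
  have hcont : Continuous φ := continuous_map_sub_algebraMap hN hρ t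
  have hcoer : Tendsto φ (cocompact ℂ) atTop := tendsto_map_sub_algebraMap_cocompact hN hρ t
  obtain ⟨a, hmin⟩ := hcont.exists_forall_le hcoer
  by_contra! hne
  have hm : 0 < φ a := (apply_nonneg N _).lt_of_ne (hne a).symm
  have hopen : IsOpen {b | φ b = φ a} := Metric.isOpen_iff.mpr fun b hb =>
    ⟨φ a ^ ρ⁻¹, by positivity, fun c hc => by
      have hd : ‖c - b‖ ^ ρ < φ a := (Real.lt_rpow_inv_iff_of_pos (norm_nonneg _) hm.le hρ).mp
        (by rwa [Metric.mem_ball, dist_eq_norm] at hc)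
      have hle := map_sub_algebraMap_add_le hN hm hmin hb hd
      rw [add_sub_cancel] at hle
      exact hle.antisymm (hmin c)⟩
  have huniv : {b | φ b = φ a} = Set.univ :=
    IsClopen.eq_univ ⟨isClosed_eq hcont continuous_const, hopen⟩ ⟨a, rfl⟩
  obtain ⟨b, hb⟩ := (hcoer.eventually_gt_atTop (φ a)).exists
  exact hb.ne' (Set.eq_univ_iff_forall.mp huniv b)

lemma map_aeval_eq_of_map_sub_algebraMap_eq_zero {t : A} {a : ℂ}
    (ha : N (t - algebraMap ℂ A a) = 0) (p : ℂ[X]) :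
    N (Polynomial.aeval t p) = ‖p.eval a‖ ^ ρ := by
  obtain ⟨q, hq⟩ := Polynomial.X_sub_C_dvd_sub_C_eval (a := a) (p := p)
  have hdiff : Polynomial.aeval t p - algebraMap ℂ A (p.eval a) =
      (t - algebraMap ℂ A a) * Polynomial.aeval t q := by
    simpa using congrArg (Polynomial.aeval t) hq
  rw [← hN]
  exact map_eq_of_map_sub_eq_zero N (by rw [hdiff, map_mul, ha, zero_mul])

end MulRingSeminorm

namespace LaurentPolynomial

lemma smeval_eq_eval₂ {R : Type*} [CommRing R] (u : Rˣ) (f : R[T;T⁻¹]) :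
    f.smeval u = eval₂ (RingHom.id R) u f := by
  induction f using LaurentPolynomial.induction_on' with
  | add p q hp hq => rw [smeval_add, map_add, hp, hq]
  | C_mul_T n c => simp

end LaurentPolynomial

open LaurentPolynomial

lemma Polynomial.aeval_T_one {R : Type*} [CommRing R] (p : R[X]) :
    Polynomial.aeval (T 1 : R[T;T⁻¹]) p = p.toLaurent := by
  simpa using Polynomial.aeval_algHom_apply Polynomial.toLaurentAlg Polynomial.X p

lemma laurentEvalAt_eq_eval₂ {a : ℂ} (ha : a ≠ 0) (f : ℂ[T;T⁻¹]) :
    laurentEvalAt a f = eval₂ (RingHom.id ℂ) (Units.mk0 a ha) f := by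
  rw [← smeval_eq_eval₂, smeval_eq_sum]
  exact Finsupp.sum_congr fun n _ => by simp [Units.val_zpow_eq_zpow_val]

lemma MulRingSeminorm.eq_rpow_norm_eval₂_of_toLaurent {ρ : ℝ} {N : MulRingSeminorm ℂ[T;T⁻¹]}
    {u : ℂˣ} (h : ∀ p : ℂ[X], N (p.toLaurent) = ‖p.eval (u : ℂ)‖ ^ ρ) (f : ℂ[T;T⁻¹]) :
    N f = ‖eval₂ (RingHom.id ℂ) u f‖ ^ ρ := by
  set ev := eval₂ (RingHom.id ℂ) u
  have hpoly (p : ℂ[X]) : N (p.toLaurent) = ‖ev (p.toLaurent)‖ ^ ρ := by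
    rw [h, eval₂_toLaurent, Polynomial.eval₂_id]
  obtain ⟨n, p, hp⟩ := exists_T_pow f
  have hT : N (T n) = ‖ev (T n)‖ ^ ρ := by rw [← Polynomial.toLaurent_X_pow, hpoly]
  have hT0 : ‖ev (T n)‖ ^ ρ ≠ 0 := by
    refine (Real.rpow_pos_of_pos (norm_pos_iff.mpr ?_) ρ).ne'
    simp [ev]
  refine mul_right_cancel₀ (hT ▸ hT0 : N (T n) ≠ 0) ?_
  rw [← map_mul, ← hp, hpoly, hp, map_mul, norm_mul,
    Real.mul_rpow (norm_nonneg _) (norm_nonneg _), hT]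

/-- §4 of the paper: for `0 < ρ ≤ 1`, a multiplicative seminorm on `ℂ[t,t^{-1}]`
restricting to `|·|^ρ` on `ℂ` and with `x(t) = e^{-1}` is evaluation at a unique point
`a` of the circle of radius `e^{-1/ρ}`, raised to the power `ρ`. -/
theorem archimedean_fiber_of_Gm_sharp
    (ρ : ℝ) (hρ : ρ ∈ Set.Ioc (0 : ℝ) 1)
    (x : LaurentPolynomial ℂ → ℝ) (hx : IsMultSeminorm x)
    (hres : ∀ c : ℂ, x (algebraMap ℂ (LaurentPolynomial ℂ) c) = ‖c‖ ^ ρ)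
    (ht : x (LaurentPolynomial.T 1) = Real.exp (-1)) :
    ∃! a : ℂ, ‖a‖ = Real.exp (-1 / ρ) ∧
      ∀ f : LaurentPolynomial ℂ, x f = ‖laurentEvalAt a f‖ ^ ρ := by
  let N := hx.toMulRingSeminorm
  obtain ⟨a, ha⟩ := N.exists_map_sub_algebraMap_eq_zero hres hρ.1 (T 1)
  have hpoly (p : ℂ[X]) : x p.toLaurent = ‖p.eval a‖ ^ ρ := by
    rw [← N.map_aeval_eq_of_map_sub_algebraMap_eq_zero hres ha p, Polynomial.aeval_T_one]; rfl
  have hnorm : ‖a‖ = Real.exp (-1 / ρ) := by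
    have hpow : ‖a‖ ^ ρ = Real.exp (-1) := by
      rw [← ht, ← Polynomial.toLaurent_X, hpoly, Polynomial.eval_X]
    rw [← Real.rpow_rpow_inv (norm_nonneg a) hρ.1.ne', hpow, ← Real.exp_mul, div_eq_mul_inv]
  have ha0 : a ≠ 0 := norm_pos_iff.mp (hnorm ▸ Real.exp_pos _)
  refine ⟨a, ⟨hnorm, fun f => ?_⟩, fun b ⟨hb, hbx⟩ => ?_⟩
  · rw [laurentEvalAt_eq_eval₂ ha0]
    exact MulRingSeminorm.eq_rpow_norm_eval₂_of_toLaurent (N := N) (u := Units.mk0 a ha0) hpoly f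
  · have hb0 : b ≠ 0 := norm_pos_iff.mp (hb ▸ Real.exp_pos _)
    have h : ‖laurentEvalAt b (T 1 - algebraMap ℂ _ a)‖ ^ ρ = 0 := (hbx _).symm.trans ha
    rw [Real.rpow_eq_zero (norm_nonneg _) hρ.1.ne', norm_eq_zero, laurentEvalAt_eq_eval₂ hb0] at h
    simpa [sub_eq_zero] using h
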